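/- Let S ⊆ h(R) be multiplicatively closed with saturation S* = { r ∈ h(R) : r/1 is a unit in S⁻¹R }, and let P be a graded submodule of M with (P :_R M) ∩ S = ∅. Then P is a graded classical S-primary submodule of M if and only if P is a graded classical S*-primary submodule of M. -/

import Mathlib

variable {G : Type*} [AddCommGroup G] [DecidableEq G]
variable {R : Type*} [CommRing R] (𝒜 : G → AddSubmonoid R) [GradedRing 𝒜]
variable {M : Type*} [AddCommGroup M] [Module R M]
variable (ℳ : G → AddSubmonoid M) [SetLike.GradedSMul 𝒜 ℳ] [DirectSum.Decomposition ℳ]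

/-- `P` is a graded submodule of the graded module `M`. -/
def IsGradedSubmodule (P : Submodule R M) : Prop :=
  ∀ m ∈ P, ∀ g : G, (DirectSum.decompose ℳ m g : M) ∈ P

/-- `P` is a graded classical primary submodule of `M`. -/
def IsGrClPrimary (P : Submodule R M) : Prop :=
  IsGradedSubmodule ℳ P ∧ P ≠ ⊤ ∧
    ∀ x y : R, ∀ m : M, SetLike.IsHomogeneousElem 𝒜 x → SetLike.IsHomogeneousElem 𝒜 y →
      SetLike.IsHomogeneousElem ℳ m → (x * y) • m ∈ P →
        x • m ∈ P ∨ ∃ n : ℕ, 0 < n ∧ y ^ n • m ∈ P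

/-- `P` is a graded classical `S`-primary submodule of `M`;
this includes the requirement `(P :_R M) ∩ S = ∅`. -/
def IsGrClSPrimary (S : Submonoid R) (P : Submodule R M) : Prop :=
  IsGradedSubmodule ℳ P ∧ Disjoint ((P.colon ⊤ : Ideal R) : Set R) (S : Set R) ∧
    ∃ s ∈ S, ∀ x y : R, ∀ m : M, SetLike.IsHomogeneousElem 𝒜 x → SetLike.IsHomogeneousElem 𝒜 y →
      SetLike.IsHomogeneousElem ℳ m → (x * y) • m ∈ P →
        (s * x) • m ∈ P ∨ ∃ n : ℕ, 0 < n ∧ (s * y ^ n) • m ∈ P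

/-- The saturation `S*` of `S`: the homogeneous elements `r` with `r/1` a unit in `S⁻¹R`. -/
def gradedSaturation (S : Submonoid R) : Submonoid R where
  carrier := {r : R | SetLike.IsHomogeneousElem 𝒜 r ∧ IsUnit (algebraMap R (Localization S) r)}
  one_mem' := ⟨SetLike.isHomogeneousElem_one 𝒜, by simp⟩
  mul_mem' := fun ha hb =>
    ⟨SetLike.IsHomogeneousElem.mul ha.1 hb.1, by rw [map_mul]; exact ha.2.mul hb.2⟩

/-! The saturation `S*` consists of the homogeneous divisors of elements of `S`. Since `P :_R M` is an
ideal and `P` a submodule, both the disjointness condition and the classical primary condition with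
witness `s` pass from a divisor `t` of some `s ∈ S` to `s`; conversely `S ⊆ S*`, so a witness in `S`
is a witness in `S*`. -/

theorem Ideal.disjoint_of_forall_exists_dvd {I : Ideal R} {S T : Set R}
    (hTS : ∀ t ∈ T, ∃ s ∈ S, t ∣ s) (hIS : Disjoint (I : Set R) S) : Disjoint (I : Set R) T :=
  Set.disjoint_left.mpr fun t htI htT =>
    let ⟨_, hsS, hts⟩ := hTS t htT
    Set.disjoint_left.mp hIS (I.mem_of_dvd hts htI) hsS

theorem Submodule.mul_smul_mem_of_dvd (P : Submodule R M) {t s : R} (hts : t ∣ s) {r : R} {m : M}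
    (h : (t * r) • m ∈ P) : (s * r) • m ∈ P := by
  obtain ⟨a, rfl⟩ := hts
  rw [mul_right_comm, mul_smul, smul_comm]
  exact P.smul_mem a h

section

variable {G : Type*} [DecidableEq G] {𝒜 : G → AddSubmonoid R} {ℳ : G → AddSubmonoid M}
  [DirectSum.Decomposition ℳ]

theorem IsGrClSPrimary.mono {S T : Submonoid R} {P : Submodule R M} (hST : S ≤ T)
    (hTS : ∀ t ∈ T, ∃ s ∈ S, t ∣ s) (h : IsGrClSPrimary 𝒜 ℳ S P) : IsGrClSPrimary 𝒜 ℳ T P :=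
  let ⟨hgr, hdisj, s, hs, hprim⟩ := h
  ⟨hgr, Ideal.disjoint_of_forall_exists_dvd hTS hdisj, s, hST hs, hprim⟩

theorem IsGrClSPrimary.of_forall_exists_dvd {S T : Submonoid R} {P : Submodule R M}
    (hST : S ≤ T) (hTS : ∀ t ∈ T, ∃ s ∈ S, t ∣ s) (h : IsGrClSPrimary 𝒜 ℳ T P) :
    IsGrClSPrimary 𝒜 ℳ S P := by
  obtain ⟨hgr, hdisj, t, ht, hprim⟩ := h
  obtain ⟨s, hs, hts⟩ := hTS t ht
  refine ⟨hgr, hdisj.mono_right hST, s, hs, fun x y m hx hy hm hxy => ?_⟩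
  rcases hprim x y m hx hy hm hxy with hxm | ⟨n, hn, hym⟩
  · exact .inl (P.mul_smul_mem_of_dvd hts hxm)
  · exact .inr ⟨n, hn, P.mul_smul_mem_of_dvd hts hym⟩

theorem isGrClSPrimary_iff_of_forall_exists_dvd {S T : Submonoid R} {P : Submodule R M}
    (hST : S ≤ T) (hTS : ∀ t ∈ T, ∃ s ∈ S, t ∣ s) :
    IsGrClSPrimary 𝒜 ℳ S P ↔ IsGrClSPrimary 𝒜 ℳ T P :=
  ⟨IsGrClSPrimary.mono hST hTS, IsGrClSPrimary.of_forall_exists_dvd hST hTS⟩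

end

theorem le_gradedSaturation {S : Submonoid R}
    (hS : (S : Set R) ⊆ {r | SetLike.IsHomogeneousElem 𝒜 r}) : S ≤ gradedSaturation 𝒜 S :=
  fun s hs => ⟨hS hs, IsLocalization.map_units (Localization S) ⟨s, hs⟩⟩

theorem exists_dvd_of_mem_gradedSaturation {S : Submonoid R} {t : R}
    (ht : t ∈ gradedSaturation 𝒜 S) : ∃ s ∈ S, t ∣ s :=
  (IsLocalization.algebraMap_isUnit_iff S).mp ht.2

theorem isGrClSPrimary_iff_saturation (S : Submonoid R)
    (hS : (S : Set R) ⊆ {r | SetLike.IsHomogeneousElem 𝒜 r}) (P : Submodule R M) :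
    IsGrClSPrimary 𝒜 ℳ S P ↔ IsGrClSPrimary 𝒜 ℳ (gradedSaturation 𝒜 S) P :=
  isGrClSPrimary_iff_of_forall_exists_dvd (le_gradedSaturation 𝒜 hS)
    fun _ ht => exists_dvd_of_mem_gradedSaturation 𝒜 ht
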